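/- Shear cancellation: let L₁, L₂ ∈ ℕ, i₁, i₂ ∈ {1,2} with i₁ ≠ i₂, and τ₁, τ₂ > 0 with 2τ₂ = 1/(2L₁) and 2L₂τ₁ an odd integer. Then the composition (y_{τ₂}^{(i₂;L₂)})² ∘ y_{τ₁}^{(i₁;L₁)} ∘ (y_{τ₂}^{(i₂;L₂)})² ∘ y_{τ₁}^{(i₁;L₁)} = Id as maps 𝕋² → 𝕋², where f² denotes f ∘ f. -/

import Mathlib

/-!
Write `(a, b)` for a point of the torus, `i₁ = 0`, `i₂ = 1` (the other case is its mirror image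
under swapping the coordinates). The first shear moves `a` by `σ τ₁`, where `σ = ±1` is the
`L₁`-sign of `b`; since `2 L₂ τ₁` is odd, this crosses an odd number of strips of width
`1 / (2 L₂)`, so the `L₂`-sign `s` seen by the vertical shears flips between `a` and `a + σ τ₁`.
The two vertical shears move `b` by `2 s τ₂ = ± 1 / (2 L₁)`, exactly one strip of width
`1 / (2 L₁)`, so the second horizontal shear has sign `-σ` and brings `a` back; the last two
vertical shears then have sign `-s` and bring `b` back.
-/

open MeasureTheory Filter

noncomputable section

instance : Fact ((0:ℝ) < 1) := ⟨one_pos⟩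

/-- The 1-dimensional torus `ℝ/ℤ`. -/
abbrev Torus : Type := AddCircle (1 : ℝ)

/-- The 2-dimensional torus `𝕋² = ℝ²/ℤ²`. -/
abbrev Torus2 : Type := Torus × Torus

/-- The representative of a point of the torus in `[0,1)`. -/
noncomputable def rep (x : Torus) : ℝ := (AddCircle.equivIco 1 0 x : ℝ)

/-- The sign (`+1` on even strips of width `1/(2L)`, `-1` on odd ones). -/
noncomputable def shearSign (L : ℕ) (c : Torus) : ℝ :=
  if Even ⌊(2 * L : ℝ) * rep c⌋ then 1 else -1

/-- The Lagrangian shear flow `y_t^{(i;L)} : 𝕋² → 𝕋²`, translating the coordinate `i`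
by `± t` according to the parity of the strip of width `1/(2L)` containing the
other coordinate. -/
noncomputable def shearFlow (i : Fin 2) (L : ℕ) (t : ℝ) (x : Torus2) : Torus2 :=
  if i = 0 then (x.1 + ((shearSign L x.2 * t : ℝ) : Torus), x.2)
  else (x.1, x.2 + ((shearSign L x.1 * t : ℝ) : Torus))


lemma rep_coe (x : ℝ) : rep (x : Torus) = Int.fract x := by
  simp [rep, AddCircle.coe_equivIco_mk_apply]

lemma shearSign_coe (L : ℕ) (x : ℝ) :
    shearSign L (x : Torus) = if Even ⌊(2 * L : ℝ) * x⌋ then 1 else -1 := by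
  have hfract : (2 * L : ℝ) * Int.fract x = (2 * L : ℝ) * x - ((2 * L * ⌊x⌋ : ℤ) : ℝ) := by
    rw [Int.fract]; push_cast; ring
  rw [shearSign, rep_coe, hfract, Int.floor_sub_intCast]
  simp [Int.even_sub, parity_simps]

lemma shearSign_eq_one_or_neg_one (L : ℕ) (c : Torus) :
    shearSign L c = 1 ∨ shearSign L c = -1 := by
  unfold shearSign; split_ifs <;> simp

lemma shearSign_add_of_odd {L : ℕ} {r : ℝ} {n : ℤ} (hn : Odd n) (hr : (2 * L : ℝ) * r = n)
    (c : Torus) : shearSign L (c + r) = -shearSign L c := by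
  induction c using QuotientAddGroup.induction_on with | H x =>
  rw [← AddCircle.coe_add, shearSign_coe, shearSign_coe, mul_add, hr, Int.floor_add_intCast]
  by_cases hx : Even ⌊(2 * L : ℝ) * x⌋ <;> simp [hx, Int.even_add, Int.not_even_iff_odd.2 hn]

lemma shearSign_add_sign_mul_of_odd {L : ℕ} {r : ℝ} {n : ℤ} (hn : Odd n)
    (hr : (2 * L : ℝ) * r = n) {σ : ℝ} (hσ : σ = 1 ∨ σ = -1) (c : Torus) :
    shearSign L (c + ↑(σ * r)) = -shearSign L c := by
  rcases hσ with rfl | rfl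
  · simpa only [one_mul] using shearSign_add_of_odd hn hr c
  · exact shearSign_add_of_odd hn.neg (by push_cast; linarith) c

lemma shearFlow_zero_mk (L : ℕ) (t : ℝ) (a b : Torus) :
    shearFlow 0 L t (a, b) = (a + ↑(shearSign L b * t), b) := rfl

lemma shearFlow_one_shearFlow_one_mk (L : ℕ) (t : ℝ) (a b : Torus) :
    shearFlow 1 L t (shearFlow 1 L t (a, b)) = (a, b + ↑(shearSign L a * (2 * t))) := by
  change (a, b + ↑(shearSign L a * t) + ↑(shearSign L a * t)) = _
  rw [add_assoc, ← AddCircle.coe_add]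
  ring_nf

lemma shearFlow_one_eq_swap (L : ℕ) (t : ℝ) (x : Torus2) :
    shearFlow 1 L t x = (shearFlow 0 L t x.swap).swap := rfl

theorem shearFlow_cancellation_zero_one {L₁ L₂ : ℕ} (hL₁ : 0 < L₁) {τ₁ τ₂ : ℝ}
    (h₂ : 2 * τ₂ = 1 / (2 * L₁)) {n : ℤ} (hn : Odd n) (h₁ : (2 * L₂ : ℝ) * τ₁ = n) :
    shearFlow 1 L₂ τ₂ ∘ shearFlow 1 L₂ τ₂ ∘ shearFlow 0 L₁ τ₁ ∘
      shearFlow 1 L₂ τ₂ ∘ shearFlow 1 L₂ τ₂ ∘ shearFlow 0 L₁ τ₁ = id := by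
  funext ⟨a, b⟩
  have hstrip : (2 * L₁ : ℝ) * (2 * τ₂) = (1 : ℤ) := by
    rw [h₂, Int.cast_one]; field_simp
  have hflip₁ : shearSign L₁ (b + ↑(shearSign L₂ (a + ↑(shearSign L₁ b * τ₁)) * (2 * τ₂))) =
      -shearSign L₁ b :=
    shearSign_add_sign_mul_of_odd odd_one hstrip (shearSign_eq_one_or_neg_one _ _) b
  have hflip₂ : shearSign L₂ (a + ↑(shearSign L₁ b * τ₁)) = -shearSign L₂ a :=
    shearSign_add_sign_mul_of_odd hn h₁ (shearSign_eq_one_or_neg_one _ _) a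
  simp only [Function.comp_apply, id]
  rw [shearFlow_zero_mk L₁ τ₁ a b, shearFlow_one_shearFlow_one_mk L₂ τ₂ _ b, shearFlow_zero_mk,
    hflip₁, neg_mul, AddCircle.coe_neg, add_neg_cancel_right, shearFlow_one_shearFlow_one_mk,
    hflip₂, neg_mul, AddCircle.coe_neg, neg_add_cancel_right]

theorem shear_cancellation_general (L₁ L₂ : ℕ) (hL₁ : 0 < L₁)
    (i₁ i₂ : Fin 2) (hne : i₁ ≠ i₂) (τ₁ τ₂ : ℝ)
    (h₂ : 2 * τ₂ = 1 / (2 * L₁))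
    (h₁ : ∃ n : ℤ, Odd n ∧ (2 * L₂ : ℝ) * τ₁ = n) :
    (shearFlow i₂ L₂ τ₂) ∘ (shearFlow i₂ L₂ τ₂) ∘ (shearFlow i₁ L₁ τ₁) ∘
      (shearFlow i₂ L₂ τ₂) ∘ (shearFlow i₂ L₂ τ₂) ∘ (shearFlow i₁ L₁ τ₁) = id := by
  obtain ⟨n, hn, h₁⟩ := h₁
  have h01 := shearFlow_cancellation_zero_one hL₁ h₂ hn h₁
  fin_cases i₁ <;> fin_cases i₂
  · exact absurd rfl hne
  · exact h01
  · funext x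
    simpa [shearFlow_one_eq_swap] using congrArg Prod.swap (congrFun h01 x.swap)
  · exact absurd rfl hne

/-- **Shear cancellation.** If `i₁ ≠ i₂`, `2τ₂ = 1/(2L₁)` and
`2L₂τ₁` is an odd integer, then
`(y_{τ₂}^{(i₂;L₂)})² ∘ y_{τ₁}^{(i₁;L₁)} ∘ (y_{τ₂}^{(i₂;L₂)})² ∘ y_{τ₁}^{(i₁;L₁)} = Id`. -/
theorem shear_cancellation (L₁ L₂ : ℕ) (hL₁ : 0 < L₁) (hL₂ : 0 < L₂)
    (i₁ i₂ : Fin 2) (hne : i₁ ≠ i₂) (τ₁ τ₂ : ℝ) (hτ₁ : 0 < τ₁) (hτ₂ : 0 < τ₂)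
    (h₂ : 2 * τ₂ = 1 / (2 * L₁))
    (h₁ : ∃ n : ℤ, Odd n ∧ (2 * L₂ : ℝ) * τ₁ = n) :
    (shearFlow i₂ L₂ τ₂) ∘ (shearFlow i₂ L₂ τ₂) ∘ (shearFlow i₁ L₁ τ₁) ∘
      (shearFlow i₂ L₂ τ₂) ∘ (shearFlow i₂ L₂ τ₂) ∘ (shearFlow i₁ L₁ τ₁) = id :=
  shear_cancellation_general L₁ L₂ hL₁ i₁ i₂ hne τ₁ τ₂ h₂ h₁

end
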